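/- arXiv:1711.06774 — 10 statements merged into one kernel-verified Lean document; each statement's English description precedes it below -/
import Mathlib

section
/- Let J : 2^L → ℝ be a nonincreasing set function (J(R) ≥ J(S) whenever R ⊆ S) with J representing optimal auction cost, and for each R ⊆ L define the VCG utilities u_l = J(R \ {l}) − J(R) for l ∈ R. If J is supermodular, then for every K ⊆ R, Σ_{l∈K} u_l ≤ J(R \ K) − J(R). -/
/-- If the nonincreasing optimal-cost function `J` is supermodular,
then the VCG utilities `u_l = J(R \ {l}) − J(R)` satisfy the core condition
`∑_{l∈K} u_l ≤ J(R \ K) − J(R)` for every `K ⊆ R`. -/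
theorem stmt_3 {L : Type*} [DecidableEq L] (J : Finset L → ℝ)
    (hmono : ∀ R S : Finset L, R ⊆ S → J S ≤ J R)
    (hsup : ∀ S T : Finset L, J S + J T ≤ J (S ∪ T) + J (S ∩ T)) :
    ∀ R K : Finset L, K ⊆ R →
      ∑ l ∈ K, (J (R.erase l) - J R) ≤ J (R \ K) - J R := by
  intro R K
  induction K using Finset.induction_on with
  | empty => simp
  | @insert a K ha ih =>
    intro hsub
    have hK : K ⊆ R := (Finset.subset_insert a K).trans hsub
    have haR : a ∈ R := hsub (Finset.mem_insert_self a K)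
    rw [Finset.sum_insert ha]
    have key := hsup (R.erase a) (R \ K)
    have hU : (R.erase a) ∪ (R \ K) = R := by
      ext x
      simp only [Finset.mem_union, Finset.mem_erase, Finset.mem_sdiff]
      constructor
      · rintro (⟨_, h⟩ | ⟨h, _⟩) <;> exact h
      · intro hx
        by_cases hxa : x = a
        · exact Or.inr ⟨hx, by simp [hxa, ha]⟩
        · exact Or.inl ⟨hxa, hx⟩
    have hI : (R.erase a) ∩ (R \ K) = R \ insert a K := by
      ext x
      simp only [Finset.mem_inter, Finset.mem_erase, Finset.mem_sdiff,
        Finset.mem_insert]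
      tauto
    rw [hU, hI] at key
    have := ih hK
    linarith
end

section
/- Let J : 2^L → ℝ. Suppose that for every set R ⊆ L and every K ⊆ R, the VCG utilities u_l = J(R \ {l}) − J(R) satisfy Σ_{l∈K} u_l ≤ J(R \ K) − J(R). Then J is supermodular. -/
/-!
Testing the core inequality on `R = A ∪ {i, l}` and `K = {i, l}` shows that the marginal value
`J (insert i A) - J A` does not decrease when a further element `l` is added to `A`. Adding the
elements of a larger base set one at a time shows that marginal values of single elements, and
then of whole sets `D`, are monotone in the base set; for the base sets `S ∩ T ⊆ T` and
`D = S \ T` this is supermodularity.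
-/

section Marginal

variable {α β : Type*} [DecidableEq α] [AddCommGroup β] [PartialOrder β] [IsOrderedAddMonoid β]
  {J : Finset α → β}

theorem marginal_le_marginal_insert_of_core
    (hcore : ∀ R K : Finset α, K ⊆ R → ∑ l ∈ K, (J (R.erase l) - J R) ≤ J (R \ K) - J R)
    {A : Finset α} {i l : α} (hil : i ≠ l) (hiA : i ∉ A) (hlA : l ∉ A) :
    J (insert i A) - J A ≤ J (insert i (insert l A)) - J (insert l A) := by
  have h := hcore (insert i (insert l A)) {i, l} (by grind)
  rw [Finset.sum_pair hil, show (insert i (insert l A)).erase i = insert l A by grind,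
    show (insert i (insert l A)).erase l = insert i A by grind,
    show insert i (insert l A) \ {i, l} = A by grind] at h
  have key : J (insert i A) + J (insert l A) ≤ J A + J (insert i (insert l A)) := by
    simpa [sub_add_sub_comm, sub_le_sub_iff_right, add_comm] using h
  rw [sub_le_sub_iff]
  simpa [add_comm] using key

variable (hpair : ∀ (A : Finset α) (i l : α), i ≠ l → i ∉ A → l ∉ A →
  J (insert i A) - J A ≤ J (insert i (insert l A)) - J (insert l A))
include hpair

omit [IsOrderedAddMonoid β] in
theorem marginal_le_marginal_union {U D : Finset α} {i : α} (hiU : i ∉ U) (hiD : i ∉ D) :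
    J (insert i U) - J U ≤ J (insert i (U ∪ D)) - J (U ∪ D) := by
  induction D using Finset.induction_on with
  | empty => simp
  | insert a D haD ih =>
    have ih := ih fun h => hiD (Finset.mem_insert_of_mem h)
    rw [Finset.union_insert]
    by_cases haUD : a ∈ U ∪ D
    · rwa [Finset.insert_eq_of_mem haUD]
    · have hia : i ≠ a := fun h => hiD (h ▸ Finset.mem_insert_self a D)
      exact ih.trans (hpair _ i a hia (by grind) haUD)

theorem union_marginal_le_of_subset {U V D : Finset α} (hUV : U ⊆ V) (hDV : Disjoint D V) :
    J (U ∪ D) - J U ≤ J (V ∪ D) - J V := by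
  induction D using Finset.induction_on with
  | empty => simp
  | insert a D haD ih =>
    have haV : a ∉ V := Finset.disjoint_left.mp hDV (Finset.mem_insert_self a D)
    have haVD : a ∉ V ∪ D := by simp [haV, haD]
    have hstep : J (insert a (U ∪ D)) - J (U ∪ D) ≤ J (insert a (V ∪ D)) - J (V ∪ D) := by
      simpa [Finset.union_sdiff_of_subset (Finset.union_subset_union_left hUV)] using
        marginal_le_marginal_union hpair (U := U ∪ D) (D := (V ∪ D) \ (U ∪ D)) (i := a)
          (fun h => haVD (Finset.union_subset_union_left hUV h)) (by simp [haVD])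
    rw [Finset.union_insert, Finset.union_insert, ← sub_add_sub_cancel _ (J (U ∪ D)),
      ← sub_add_sub_cancel (J (insert a (V ∪ D))) (J (V ∪ D))]
    exact add_le_add hstep (ih (Finset.disjoint_insert_left.mp hDV).2)

theorem supermodular_of_marginal_le_marginal_insert (S T : Finset α) :
    J S + J T ≤ J (S ∪ T) + J (S ∩ T) := by
  have h := union_marginal_le_of_subset hpair (Finset.inter_subset_right (s₁ := S))
    (Finset.sdiff_disjoint (s := T) (t := S))
  rwa [Finset.union_comm, Finset.sdiff_union_inter, Finset.union_sdiff_self_eq_union,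
    sub_le_sub_iff, Finset.union_comm] at h

end Marginal

/-- If for every `R ⊆ L` and every `K ⊆ R` the VCG utilities
`u_l = J(R \ {l}) − J(R)` satisfy `∑_{l∈K} u_l ≤ J(R \ K) − J(R)`, then `J`
is supermodular. -/
theorem stmt_4 {L : Type*} [DecidableEq L] (J : Finset L → ℝ)
    (hcore : ∀ R K : Finset L, K ⊆ R →
      ∑ l ∈ K, (J (R.erase l) - J R) ≤ J (R \ K) - J R) :
    ∀ S T : Finset L, J S + J T ≤ J (S ∪ T) + J (S ∩ T) :=
  supermodular_of_marginal_le_marginal_insert fun _ _ _ hil hiA hlA =>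
    marginal_le_marginal_insert_of_core hcore hil hiA hlA
end

section
/- In the single-good procurement auction with strictly marginally increasing costs, the optimal cost function J is supermodular: for all S ⊆ L, j ∉ S, and w ∈ S, J((S∪{j}) \ {w}) − J(S∪{j}) ≤ J(S \ {w}) − J(S). -/
/-- Optimal procurement cost for coalition `S`: quantities are nonnegative
multiples of the increment `m`, represented by their integer number of
increments; `N` is the required number of increments (`M = N·m`), and
`c l n` is bidder `l`'s cost for `n` increments. -/
noncomputable def Jcost {L : Type*} [DecidableEq L] (c : L → ℕ → ℝ) (N : ℕ)
    (S : Finset L) : ℝ :=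
  sInf {v : ℝ | ∃ x : L → ℕ, N ≤ ∑ l ∈ S, x l ∧ v = ∑ l ∈ S, c l (x l)}

/-!
Take feasible allocations `x` for `T = S \ {w}` and `y` for `S ∪ {j}`. On `T`, the
quantities `x` and `y` can be redistributed pointwise into `u` and `v = x + y - u`, with
each `u l` between `x l` and `y l`, so that `u` together with `y w` serves `S` and `v`
together with `y j` serves `T ∪ {j}`. Convexity of each cost makes such a rebalancing of
a pair cheaper; taking infima over `x` and `y` gives
`J(S) + J(T ∪ {j}) ≤ J(T) + J(S ∪ {j})`, which is the claim.
-/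

open Finset Function

def IncreasingDifferences (f : ℕ → ℝ) : Prop :=
  ∀ ⦃a b : ℕ⦄, a ≤ b → ∀ δ, f (a + δ) - f a ≤ f (b + δ) - f b

lemma IncreasingDifferences.of_strict {f : ℕ → ℝ}
    (hf : ∀ a b δ : ℕ, a < b → 0 < δ → f (a + δ) - f a < f (b + δ) - f b) :
    IncreasingDifferences f := by
  intro a b hab δ
  rcases Nat.eq_zero_or_pos δ with rfl | hδ
  · simp
  rcases hab.eq_or_lt with rfl | hab
  · rfl
  exact (hf a b δ hab hδ).le

lemma IncreasingDifferences.add_le_add {f : ℕ → ℝ} (hf : IncreasingDifferences f)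
    {a b u v : ℕ} (hu : min a b ≤ u) (hv : min a b ≤ v) (h : u + v = a + b) :
    f u + f v ≤ f a + f b := by
  wlog hab : a ≤ b generalizing a b
  · rw [add_comm (f a)]
    exact this (by rwa [min_comm]) (by rwa [min_comm]) (by omega) (by omega)
  rw [min_eq_left hab] at hu hv
  have key := hf hv (u - a)
  rw [show a + (u - a) = u by omega, show v + (u - a) = b by omega] at key
  linarith

lemma Finset.exists_sum_eq_of_le_of_le {ι : Type*} (s : Finset ι) {lo hi : ι → ℕ}
    (hle : ∀ i ∈ s, lo i ≤ hi i) {A : ℕ} (hlo : ∑ i ∈ s, lo i ≤ A) (hhi : A ≤ ∑ i ∈ s, hi i) :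
    ∃ u : ι → ℕ, (∀ i ∈ s, lo i ≤ u i ∧ u i ≤ hi i) ∧ ∑ i ∈ s, u i = A := by
  classical
  induction s using Finset.induction_on generalizing A with
  | empty => exact ⟨0, by simp, by simp_all⟩
  | insert a s ha ih =>
    rw [sum_insert ha] at hlo hhi
    have hle' : ∀ i ∈ s, lo i ≤ hi i := fun i hi => hle i (mem_insert_of_mem hi)
    have hla := hle a (mem_insert_self a s)
    have hsum := sum_le_sum hle'
    set ua := min (hi a) (A - ∑ i ∈ s, lo i)
    obtain ⟨u, hu, hsu⟩ := ih hle' (A := A - ua) (by omega) (by omega)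
    refine ⟨update u a ua, fun i hi => ?_, ?_⟩
    · rcases mem_insert.mp hi with rfl | hi
      · rw [update_self]; omega
      · rw [update_of_ne (ne_of_mem_of_not_mem hi ha)]; exact hu i hi
    · rw [sum_insert ha, update_self, sum_update_of_notMem ha, hsu]; omega

lemma Finset.sum_insert_update {ι α β : Type*} [DecidableEq ι] [AddCommMonoid β]
    {s : Finset ι} {a : ι} (ha : a ∉ s) (F : ι → α → β) (g : ι → α) (b : α) :
    ∑ i ∈ insert a s, F i (update g a b i) = F a b + ∑ i ∈ s, F i (g i) := by
  rw [sum_insert ha, update_self]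
  simp_rw [apply_update F]
  rw [sum_update_of_notMem ha]

section Exchange

variable {L : Type*} (c : L → ℕ → ℝ)

lemma exists_rebalance (hc : ∀ l, IncreasingDifferences (c l)) (T : Finset L) (x y : L → ℕ)
    {A : ℕ} (hlo : ∑ l ∈ T, min (x l) (y l) ≤ A) (hhi : A ≤ ∑ l ∈ T, max (x l) (y l)) :
    ∃ u v : L → ℕ, ∑ l ∈ T, u l = A ∧
      ∑ l ∈ T, u l + ∑ l ∈ T, v l = ∑ l ∈ T, x l + ∑ l ∈ T, y l ∧
      ∑ l ∈ T, c l (u l) + ∑ l ∈ T, c l (v l) ≤ ∑ l ∈ T, c l (x l) + ∑ l ∈ T, c l (y l) := by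
  obtain ⟨u, hu, hsum⟩ :=
    T.exists_sum_eq_of_le_of_le (fun _ _ => min_le_max) hlo hhi
  have huv : ∀ l ∈ T, u l + (x l + y l - u l) = x l + y l := by
    intro l hl
    have := hu l hl
    omega
  refine ⟨u, fun l => x l + y l - u l, hsum, ?_, ?_⟩
  · simp only [← sum_add_distrib]
    exact sum_congr rfl huv
  · simp only [← sum_add_distrib]
    refine sum_le_sum fun l hl => (hc l).add_le_add (hu l hl).1 ?_ (huv l hl)
    have := hu l hl
    omega

end Exchange

section Jcost

variable {L : Type*} [DecidableEq L] (c : L → ℕ → ℝ) (N : ℕ)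

lemma Jcost_le_sum (hnn : ∀ l n, 0 ≤ c l n) {S : Finset L} (x : L → ℕ)
    (hx : N ≤ ∑ l ∈ S, x l) : Jcost c N S ≤ ∑ l ∈ S, c l (x l) := by
  refine csInf_le ⟨0, ?_⟩ ⟨x, hx, rfl⟩
  rintro _ ⟨x, -, rfl⟩
  exact sum_nonneg fun l _ => hnn l (x l)

lemma le_Jcost {S : Finset L} (hS : S.Nonempty) {b : ℝ}
    (h : ∀ x : L → ℕ, N ≤ ∑ l ∈ S, x l → b ≤ ∑ l ∈ S, c l (x l)) : b ≤ Jcost c N S := by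
  obtain ⟨l₀, hl₀⟩ := hS
  refine le_csInf ⟨_, Pi.single l₀ N, by simp [hl₀], rfl⟩ ?_
  rintro _ ⟨x, hx, rfl⟩
  exact h x hx

theorem Jcost_insert_add_Jcost_insert_le (hnn : ∀ l n, 0 ≤ c l n)
    (hc : ∀ l, IncreasingDifferences (c l)) {T : Finset L} (hT : T.Nonempty) {j w : L}
    (hj : j ∉ T) (hw : w ∉ T) (hjw : j ≠ w) :
    Jcost c N (insert w T) + Jcost c N (insert j T) ≤
      Jcost c N T + Jcost c N (insert j (insert w T)) := by
  have hjwT : j ∉ insert w T := by simp [hjw, hj]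
  suffices key : ∀ x y : L → ℕ, N ≤ ∑ l ∈ T, x l → N ≤ ∑ l ∈ insert j (insert w T), y l →
      Jcost c N (insert w T) + Jcost c N (insert j T) ≤
        ∑ l ∈ T, c l (x l) + ∑ l ∈ insert j (insert w T), c l (y l) by
    have hT' : ∀ y : L → ℕ, N ≤ ∑ l ∈ insert j (insert w T), y l →
        Jcost c N (insert w T) + Jcost c N (insert j T) -
          ∑ l ∈ insert j (insert w T), c l (y l) ≤ Jcost c N T :=
      fun y hy => le_Jcost c N hT fun x hx => by linarith [key x y hx hy]
    have := le_Jcost c N (insert_nonempty j _)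
      (b := Jcost c N (insert w T) + Jcost c N (insert j T) - Jcost c N T)
      fun y hy => by linarith [hT' y hy]
    linarith
  intro x y hx hy
  rw [sum_insert hjwT, sum_insert hw] at hy ⊢
  have hmin_y : ∑ l ∈ T, min (x l) (y l) ≤ ∑ l ∈ T, y l := sum_le_sum fun _ _ => min_le_right _ _
  have hx_max : ∑ l ∈ T, x l ≤ ∑ l ∈ T, max (x l) (y l) := sum_le_sum fun _ _ => le_max_left _ _
  -- `u` must cover what `y w` leaves of `N`, and `v` then still covers `N`.
  obtain ⟨u, v, hu, huv, hcost⟩ := exists_rebalance c hc T x y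
    (A := max (∑ l ∈ T, min (x l) (y l)) (N - y w)) (le_max_left _ _)
    (max_le (sum_le_sum fun _ _ => min_le_max) (by omega))
  have hU := Jcost_le_sum c N hnn (S := insert w T) (update u w (y w))
    (by rw [sum_insert_update hw (fun _ n => n)]; omega)
  have hV := Jcost_le_sum c N hnn (S := insert j T) (update v j (y j))
    (by rw [sum_insert_update hj (fun _ n => n)]; omega)
  rw [sum_insert_update hw c] at hU
  rw [sum_insert_update hj c] at hV
  linarith

end Jcost

theorem stmt_7_general {L : Type*} [DecidableEq L] (c : L → ℕ → ℝ) (N : ℕ)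
    (hnn : ∀ l n, 0 ≤ c l n)
    (hmarg : ∀ l : L, ∀ a b δ : ℕ, a < b → 0 < δ →
      c l (a + δ) - c l a < c l (b + δ) - c l b)
    (S : Finset L) (j : L) (hj : j ∉ S) (w : L) (hw : w ∈ S)
    (hfeas : (S.erase w).Nonempty) :
    Jcost c N ((insert j S).erase w) - Jcost c N (insert j S) ≤
      Jcost c N (S.erase w) - Jcost c N S := by
  have hjw : j ≠ w := ne_of_mem_of_not_mem hw hj |>.symm
  have key := Jcost_insert_add_Jcost_insert_le c N hnn
    (fun l => .of_strict (hmarg l)) hfeas (fun h => hj (mem_of_mem_erase h))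
    (notMem_erase w S) hjw
  rw [insert_erase hw] at key
  rw [erase_insert_of_ne hjw]
  linarith

/-- Theorem 4: with strictly marginally increasing costs, the
optimal procurement cost `J` is supermodular:
`J((S∪{j}) \ {w}) − J(S∪{j}) ≤ J(S \ {w}) − J(S)`. -/
theorem stmt_7 {L : Type*} [DecidableEq L] (c : L → ℕ → ℝ) (N : ℕ)
    (hN : 0 < N)
    (hc0 : ∀ l, c l 0 = 0)
    (hnn : ∀ l n, 0 ≤ c l n)
    (hmono : ∀ l, Monotone (c l))
    (hmarg : ∀ l : L, ∀ a b δ : ℕ, a < b → 0 < δ →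
      c l (a + δ) - c l a < c l (b + δ) - c l b)
    (S : Finset L) (j : L) (hj : j ∉ S) (w : L) (hw : w ∈ S)
    (hfeas : (S.erase w).Nonempty) :
    Jcost c N ((insert j S).erase w) - Jcost c N (insert j S) ≤
      Jcost c N (S.erase w) - Jcost c N S :=
  stmt_7_general c N hnn hmarg S j hj w hw hfeas
end

section
/- Let u ∈ ℝ × ℝ_{≥0}^{|L|} be a utility allocation with winners W ⊆ L (losers l ∉ W have u_l = 0). Then u lies in the core, i.e., u_0 + Σ_{l∈L} u_l = −J(L) and u_0 + Σ_{l∈S} u_l ≥ −J(S) for all S ⊂ L, if and only if u_0 = −J(L) − Σ_{l∈L} u_l and Σ_{l∈K} u_l ≤ J(L \ K) − J(L) for all K ⊆ W. -/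
/-- Lemma 1: a nonnegative utility allocation `(u0, u)` with
winners `W` (losers get zero utility) lies in the core iff
`u0 = −J(L) − ∑_l u_l` and `∑_{l∈K} u_l ≤ J(L \ K) − J(L)` for all `K ⊆ W`. -/
theorem stmt_8 {L : Type*} [Fintype L] [DecidableEq L] (J : Finset L → ℝ)
    (hmono : ∀ R S : Finset L, R ⊆ S → J S ≤ J R)
    (W : Finset L) (u0 : ℝ) (u : L → ℝ)
    (hnn : ∀ l, 0 ≤ u l) (hlose : ∀ l ∉ W, u l = 0) :
    (u0 + ∑ l, u l = -J Finset.univ ∧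
      ∀ S : Finset L, u0 + ∑ l ∈ S, u l ≥ -J S) ↔
    (u0 = -J Finset.univ - ∑ l, u l ∧
      ∀ K ⊆ W, ∑ l ∈ K, u l ≤ J (Finset.univ \ K) - J Finset.univ) := by
  constructor
  · rintro ⟨heff, hstab⟩
    refine ⟨by linarith, fun K hK => ?_⟩
    have h := hstab (Finset.univ \ K)
    have hsplit : ∑ l ∈ Finset.univ \ K, u l = (∑ l, u l) - ∑ l ∈ K, u l := by
      rw [Finset.sum_sdiff_eq_sub (Finset.subset_univ K)]
    linarith
  · rintro ⟨heff, hcons⟩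
    refine ⟨by linarith, fun S => ?_⟩
    set K := W \ S with hKdef
    have hK := hcons K (Finset.sdiff_subset)
    have hmon : J (Finset.univ \ K) ≤ J S := by
      apply hmono
      intro x hx
      simp only [hKdef, Finset.mem_sdiff, Finset.mem_univ, true_and]
      tauto
    have hsum : ∑ l ∈ Finset.univ \ S, u l = ∑ l ∈ K, u l := by
      rw [← Finset.sum_subset (s₁ := K) (s₂ := Finset.univ \ S)]
      · intro x hx
        simp only [hKdef, Finset.mem_sdiff] at hx
        exact Finset.mem_sdiff.mpr ⟨Finset.mem_univ x, hx.2⟩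
      · intro x hx hxK
        simp only [hKdef, Finset.mem_sdiff] at hx hxK
        exact hlose x (by tauto)
    have hsplit : ∑ l ∈ Finset.univ \ S, u l = (∑ l, u l) - ∑ l ∈ S, u l := by
      rw [Finset.sum_sdiff_eq_sub (Finset.subset_univ S)]
    linarith
end

section
/- Suppose J : 2^L → ℝ ∪ {∞} is nonincreasing and J(L \ {l₁, l₂}) = ∞ for every pair of distinct winners l₁, l₂ ∈ W (infeasibility when two winners are removed). Then the VCG utility allocation u_l = J(L \ {l}) − J(L) for l ∈ W, u_l = 0 for l ∉ W, together with u_0 = −J(L) − Σ_l u_l, lies in the core. -/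
/-- Proposition 1: if the (extended-real-valued, nonincreasing)
cost `J` is infinite whenever any two distinct winners are removed, then the
VCG utility allocation lies in the core: the utilities are nonnegative and
every core inequality (with finite right-hand side) holds. -/
theorem stmt_10 {L : Type*} [Fintype L] [DecidableEq L] (J : Finset L → EReal)
    (W : Finset L)
    (hbot : ∀ S : Finset L, J S ≠ ⊥)
    (hmono : ∀ R S : Finset L, R ⊆ S → J S ≤ J R)
    (hfin : J Finset.univ ≠ ⊤)
    (hfinl : ∀ l : L, J (Finset.univ.erase l) ≠ ⊤)
    (hinf : ∀ l₁ ∈ W, ∀ l₂ ∈ W, l₁ ≠ l₂ →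
      J (Finset.univ \ {l₁, l₂}) = ⊤) :
    -- VCG utilities: `u l = J(L \ {l}) − J(L)` for winners, `0` for losers
    (∀ l : L, 0 ≤ (if l ∈ W then
        (J (Finset.univ.erase l)).toReal - (J Finset.univ).toReal else 0)) ∧
    ∀ K ⊆ W, J (Finset.univ \ K) ≠ ⊤ →
      ∑ l ∈ K, (if l ∈ W then
          (J (Finset.univ.erase l)).toReal - (J Finset.univ).toReal else 0) ≤
        (J (Finset.univ \ K)).toReal - (J Finset.univ).toReal := by
  have htoReal : ∀ S T : Finset L, J S ≠ ⊤ → J T ≠ ⊤ → J T ≤ J S →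
      (J T).toReal ≤ (J S).toReal := by
    intro S T hS hT h
    exact EReal.toReal_le_toReal h (hbot T) hS
  constructor
  · intro l
    by_cases hl : l ∈ W
    · simp only [hl, if_true]
      have := htoReal (Finset.univ.erase l) Finset.univ (hfinl l) hfin
        (hmono _ _ (Finset.erase_subset _ _))
      linarith
    · simp [hl]
  · intro K hK hKfin
    have hcard : K.card ≤ 1 := by
      by_contra h
      push_neg at h
      obtain ⟨a, ha, b, hb, hab⟩ := Finset.one_lt_card.mp h
      have hsub : Finset.univ \ K ⊆ Finset.univ \ ({a, b} : Finset L) := by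
        apply Finset.sdiff_subset_sdiff (le_refl _)
        intro x hx
        simp only [Finset.mem_insert, Finset.mem_singleton] at hx
        rcases hx with rfl | rfl <;> assumption
      have := hmono _ _ hsub
      rw [hinf a (hK ha) b (hK hb) hab] at this
      exact hKfin (top_le_iff.mp this)
    interval_cases h : K.card
    · rw [Finset.card_eq_zero.mp h]
      simp
    · obtain ⟨l, rfl⟩ := Finset.card_eq_one.mp h
      have hlW : l ∈ W := hK (Finset.mem_singleton_self l)
      simp only [Finset.sum_singleton, hlW, if_true]
      have : Finset.univ \ ({l} : Finset L) = Finset.univ.erase l := by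
        ext x; simp [Finset.mem_erase, and_comm]
      rw [this]
end

section
/- If the supermodularity of a set function M : 2^T → ℝ holds, then the induced function f(A) = max { M(T') : T' ⊆ T, A ⊇ A^{T'} } is supermodular, where {A^τ}_{τ∈T} is a partition of L and A^{T'} = ∪_{τ∈T'} A^τ. -/
/-- The induced requirement function `f(B) = max { M(T') : A^{T'} ⊆ B }` where
`A^{T'} = ∪_{τ∈T'} A^τ`. -/
noncomputable def inducedF {T L : Type*} [DecidableEq L]
    (M : Finset T → ℝ) (A : T → Finset L) (B : Finset L) : ℝ :=
  sSup {v : ℝ | ∃ T' : Finset T, T'.biUnion A ⊆ B ∧ v = M T'}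

/-- if `M` is supermodular (and nondecreasing, normalized) and
`{A^τ}` is a partition of `L`, then the induced function
`f(B) = max { M(T') : B ⊇ A^{T'} }` is supermodular. -/
theorem stmt_11 {T L : Type*} [Fintype T] [DecidableEq T] [Fintype L] [DecidableEq L]
    (M : Finset T → ℝ) (A : T → Finset L)
    (hM0 : M ∅ = 0)
    (hMmono : ∀ U V : Finset T, U ⊆ V → M U ≤ M V)
    (hMsup : ∀ U V : Finset T, M U + M V ≤ M (U ∪ V) + M (U ∩ V))
    (hdisj : ∀ τ₁ τ₂ : T, τ₁ ≠ τ₂ → Disjoint (A τ₁) (A τ₂))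
    (hcover : Finset.univ.biUnion A = (Finset.univ : Finset L)) :
    ∀ B C : Finset L,
      inducedF M A B + inducedF M A C ≤
        inducedF M A (B ∪ C) + inducedF M A (B ∩ C) := by
  have hfin : ∀ B : Finset L,
      {v : ℝ | ∃ T' : Finset T, T'.biUnion A ⊆ B ∧ v = M T'}.Finite := by
    intro B
    refine (Set.finite_range M).subset ?_
    rintro v ⟨T', _, rfl⟩; exact ⟨T', rfl⟩
  have key : ∀ B : Finset L, ∃ U : Finset T, U.biUnion A ⊆ B ∧ inducedF M A B = M U := by
    intro B
    have hne : {v : ℝ | ∃ T' : Finset T, T'.biUnion A ⊆ B ∧ v = M T'}.Nonempty :=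
      ⟨M ∅, ∅, by simp, rfl⟩
    obtain ⟨U, hU, hv⟩ := hne.csSup_mem (hfin B)
    exact ⟨U, hU, hv⟩
  have hle : ∀ (B : Finset L) (U : Finset T), U.biUnion A ⊆ B → M U ≤ inducedF M A B := by
    intro B U hU
    exact le_csSup (hfin B).bddAbove ⟨U, hU, rfl⟩
  intro B C
  obtain ⟨U, hU, hUeq⟩ := key B
  obtain ⟨V, hV, hVeq⟩ := key C
  have h1 : (U ∪ V).biUnion A ⊆ B ∪ C := by
    refine Finset.biUnion_subset.2 fun t ht => ?_
    rcases Finset.mem_union.1 ht with h | h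
    · exact ((Finset.subset_biUnion_of_mem A h).trans hU).trans Finset.subset_union_left
    · exact ((Finset.subset_biUnion_of_mem A h).trans hV).trans Finset.subset_union_right
  have h2 : (U ∩ V).biUnion A ⊆ B ∩ C := by
    refine Finset.biUnion_subset.2 fun t ht => Finset.subset_inter ?_ ?_
    · exact (Finset.subset_biUnion_of_mem A (Finset.mem_of_mem_inter_left ht)).trans hU
    · exact (Finset.subset_biUnion_of_mem A (Finset.mem_of_mem_inter_right ht)).trans hV
  rw [hUeq, hVeq]
  calc M U + M V ≤ M (U ∪ V) + M (U ∩ V) := hMsup U V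
    _ ≤ inducedF M A (B ∪ C) + inducedF M A (B ∩ C) :=
        add_le_add (hle _ _ h1) (hle _ _ h2)
end

section
/- Under a supermodular cost function J, losing bidders cannot profit by colluding in the VCG mechanism: if K ⊆ L is a set of bidders each of whom has zero VCG utility when all bid truthfully (u_l^{VCG}(C) = J(C_{-l}) − J(C) = 0 for l ∈ K, where C_{-l} uses all bidders except l), then for any joint deviation B_K by K, each l ∈ K still obtains utility at most 0, i.e., u_l^{VCG}((B_K, C_{-K})) ≤ 0. -/
/-- Theorem 3(i): under a supermodular cost function, truthful
losers cannot profit from collusion in the VCG mechanism.  `J S P` is the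
optimal cost with bidder set `S` and bid profile `P`; `C` is the truthful
profile; `K` is a set of bidders who lose when everyone bids truthfully
(removing any subset of them does not change the cost); `P` is a joint
deviation by `K`; `u P l` is bidder `l`'s true utility, which by
dominant-strategy incentive compatibility is at most its utility when deviating
back to truth, `J(B_{-l}) − J(B_{-l}, C_l)`. -/
theorem stmt_14 {L Bid : Type*} [Fintype L] [DecidableEq L]
    (J : Finset L → (L → Bid) → ℝ) (C : L → Bid)
    (u : (L → Bid) → L → ℝ) (K : Finset L) (P : L → Bid)
    (hrestr : ∀ (S : Finset L) (P₁ P₂ : L → Bid),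
      (∀ k ∈ S, P₁ k = P₂ k) → J S P₁ = J S P₂)
    (hsup : ∀ (Q : L → Bid) (S R : Finset L), S ⊆ R → ∀ l ∈ S,
      J (R.erase l) Q - J R Q ≤ J (S.erase l) Q - J S Q)
    (hP : ∀ k ∉ K, P k = C k)
    (hdsic : ∀ l, u P l ≤
      J (Finset.univ.erase l) P - J Finset.univ (Function.update P l (C l)))
    (hlose : ∀ K' ⊆ K, J (Finset.univ \ K') C = J Finset.univ C) :
    ∀ l ∈ K, u P l ≤ 0 := by
  intro l hl
  set Q : L → Bid := Function.update P l (C l) with hQ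
  -- Q agrees with C outside K.erase l
  have hQC : ∀ k, k ∉ K.erase l → Q k = C k := by
    intro k hk
    by_cases hkl : k = l
    · subst hkl; simp [hQ]
    · rw [Finset.mem_erase] at hk
      push_neg at hk
      have hkK : k ∉ K := hk hkl
      simp [hQ, Function.update_of_ne hkl, hP k hkK]
  set S : Finset L := Finset.univ \ K.erase l with hS
  have hlS : l ∈ S := by simp [hS]
  have hsub : S ⊆ Finset.univ := Finset.subset_univ S
  have key := hsup Q S Finset.univ hsub l hlS
  have hSe : S.erase l = Finset.univ \ K := by
    ext x
    simp only [hS, Finset.mem_erase, Finset.mem_sdiff, Finset.mem_univ, true_and]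
    constructor
    · rintro ⟨hxl, hx⟩ hxK
      exact hx ⟨hxl, hxK⟩
    · intro hx
      constructor
      · rintro rfl; exact hx hl
      · intro h; exact hx h.2
  have h1 : J (S.erase l) Q = J Finset.univ C := by
    rw [hSe, hrestr _ Q C (fun k hk => hQC k (by
      rw [Finset.mem_sdiff] at hk
      exact fun h => hk.2 (Finset.mem_of_mem_erase h)))]
    exact hlose K (le_refl K)
  have h2 : J S Q = J Finset.univ C := by
    rw [hrestr S Q C (fun k hk => hQC k (by
      rw [hS, Finset.mem_sdiff] at hk; exact hk.2))]
    exact hlose (K.erase l) (Finset.erase_subset l K)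
  have h3 : J (Finset.univ.erase l) Q = J (Finset.univ.erase l) P := by
    apply hrestr
    intro k hk
    exact Function.update_of_ne (Finset.mem_erase.mp hk).1 _ _
  have := hdsic l
  rw [h1, h2] at key
  simp only [sub_self] at key
  rw [← hQ] at this
  linarith [key, this, h3]
end

section
/- In any core-selecting mechanism, the collective utility of a coalition K of deviating bidders satisfies Σ_{l∈K} u_l(B) ≤ J(B_{-K}) − J(Ĉ) + (value gap), and in particular if all members of K lose under the profile Ĉ = (C_K, B_{-K}) (so J(B_{-K}) = J(Ĉ)), then Σ_{l∈K} u_l(B) ≤ 0. -/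
/-- Theorem 6(i): in a core-selecting mechanism, a coalition `K`
of bidders all of whom lose under the profile `Ĉ = (C_K, B_{-K})` (so that
`J(B_{-K}) = J(Ĉ)`) obtains nonpositive collective true utility from any joint
deviation.  `(x, y)` is the allocation chosen under the deviating bids `P`
(with full cost `Jfull`), `JmK = J(B_{-K})`, `JC = J(Ĉ)` (an infimum, so it is
bounded by the value of `Ĉ`'s objective at the feasible point `(x, y)`), and
`ubar` are the revealed core utilities satisfying Lemma 4's inequality. -/
theorem stmt_15 {L Y : Type*} [Fintype L] [DecidableEq L] {t : ℕ}
    (Feas : Set ((L → (Fin t → ℝ)) × Y))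
    (P c : L → (Fin t → ℝ) → ℝ)
    (d : (L → (Fin t → ℝ)) → Y → ℝ)
    (K : Finset L) (x : L → Fin t → ℝ) (y : Y)
    (ubar : L → ℝ)
    (hxy : (x, y) ∈ Feas)
    (Jfull JmK JC : ℝ)
    (hJfull : Jfull = (∑ l, P l (x l)) + d x y)
    (hJC : JC ≤ (∑ l ∈ K, c l (x l)) + (∑ l ∈ Kᶜ, P l (x l)) + d x y)
    (hcore : ∑ l ∈ K, ubar l ≤ JmK - Jfull)
    (hlose : JmK = JC) :
    ∑ l ∈ K, (ubar l + P l (x l) - c l (x l)) ≤ 0 := by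
  have hsplit : (∑ l, P l (x l)) = (∑ l ∈ K, P l (x l)) + ∑ l ∈ Kᶜ, P l (x l) :=
    (Finset.sum_add_sum_compl K _).symm
  rw [Finset.sum_sub_distrib, Finset.sum_add_distrib]
  have := hcore
  rw [hlose, hJfull, hsplit] at this
  linarith
end

section
/- Intersecting a polymatroid with box constraints yields a polymatroid: if k : 2^S → ℝ is a rank function and X̄_l ≥ 0 are upper bounds, then { x ∈ ℝ_{≥0}^S : Σ_{l∈A} x_l ≤ k(A) ∀ A ⊆ S } ∩ { x : x_l ≤ X̄_l ∀ l } = { x ∈ ℝ_{≥0}^S : Σ_{l∈A} x_l ≤ f̄(A) ∀ A ⊆ S } where f̄(A) = min_{B⊆A} ( k(A\B) + Σ_{l∈B} X̄_l ), and f̄ is itself a rank function (normalized, nondecreasing, submodular). -/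
lemma stmt18_aux_sum {S : Type*} [Fintype S] [DecidableEq S] (A B TA TB : Finset S)
    (hTA : TA ⊆ A) (hTB : TB ⊆ B) (g : S → ℝ) (hg : ∀ l, 0 ≤ g l) :
    ∑ l ∈ (A ∪ B) \ (TA ∪ TB), g l + ∑ l ∈ (A ∩ B) \ (TA ∩ TB), g l ≤
      ∑ l ∈ A \ TA, g l + ∑ l ∈ B \ TB, g l := by
  have h : ∀ X : Finset S, ∑ l ∈ X, g l = ∑ l ∈ Finset.univ, if l ∈ X then g l else 0 := by
    intro X; rw [Finset.sum_ite_mem, Finset.univ_inter]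
  rw [h ((A ∪ B) \ (TA ∪ TB)), h ((A ∩ B) \ (TA ∩ TB)), h (A \ TA), h (B \ TB),
    ← Finset.sum_add_distrib, ← Finset.sum_add_distrib]
  apply Finset.sum_le_sum
  intro l _
  have hta := @hTA l
  have htb := @hTB l
  by_cases h1 : l ∈ A <;> by_cases h2 : l ∈ B <;> by_cases h3 : l ∈ TA <;>
    by_cases h4 : l ∈ TB <;>
    simp [Finset.mem_sdiff, Finset.mem_union, Finset.mem_inter, h1, h2, h3, h4] <;>
    linarith [hg l]

/-- intersecting a polymatroid with box constraints yields a
polymatroid: `P(k) ∩ [0, X̄] = P(f̄)` with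
`f̄(A) = min_{B ⊆ A} (k(A \ B) + ∑_{l∈B} X̄_l)`, and `f̄` is itself a rank
function (normalized, nondecreasing, submodular). -/
theorem stmt_18 {S : Type*} [Fintype S] [DecidableEq S]
    (k : Finset S → ℝ) (Xbar : S → ℝ)
    (hk0 : k ∅ = 0)
    (hkmono : ∀ A B : Finset S, A ⊆ B → k A ≤ k B)
    (hksub : ∀ A B : Finset S, k (A ∪ B) + k (A ∩ B) ≤ k A + k B)
    (hX : ∀ l, 0 ≤ Xbar l)
    (fbar : Finset S → ℝ)
    (hfbar : ∀ A : Finset S, fbar A =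
      A.powerset.inf' (Finset.powerset_nonempty A)
        (fun B => k (A \ B) + ∑ l ∈ B, Xbar l)) :
    ({x : S → ℝ | (∀ l, 0 ≤ x l) ∧ ∀ A : Finset S, ∑ l ∈ A, x l ≤ k A} ∩
        {x : S → ℝ | ∀ l, x l ≤ Xbar l} =
      {x : S → ℝ | (∀ l, 0 ≤ x l) ∧ ∀ A : Finset S, ∑ l ∈ A, x l ≤ fbar A}) ∧
    fbar ∅ = 0 ∧
    (∀ A B : Finset S, A ⊆ B → fbar A ≤ fbar B) ∧
    (∀ A B : Finset S, fbar (A ∪ B) + fbar (A ∩ B) ≤ fbar A + fbar B) := by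
  -- key upper bound: for T ⊆ A, fbar A ≤ k T + ∑_{A\T} Xbar
  have hle : ∀ A T : Finset S, T ⊆ A → fbar A ≤ k T + ∑ l ∈ A \ T, Xbar l := by
    intro A T hT
    rw [hfbar A]
    have hmem : A \ T ∈ A.powerset := Finset.mem_powerset.mpr (Finset.sdiff_subset)
    have := Finset.inf'_le (fun B => k (A \ B) + ∑ l ∈ B, Xbar l) hmem
    rwa [Finset.sdiff_sdiff_eq_self hT] at this
  -- existence of minimizer
  have hex : ∀ A : Finset S, ∃ T, T ⊆ A ∧ fbar A = k T + ∑ l ∈ A \ T, Xbar l := by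
    intro A
    obtain ⟨B, hB, hBval⟩ := Finset.exists_mem_eq_inf' (Finset.powerset_nonempty A)
      (fun B => k (A \ B) + ∑ l ∈ B, Xbar l)
    rw [Finset.mem_powerset] at hB
    refine ⟨A \ B, Finset.sdiff_subset, ?_⟩
    rw [hfbar A, hBval, Finset.sdiff_sdiff_eq_self hB]
  have hzero : fbar ∅ = 0 := by
    have h1 := hle ∅ ∅ (subset_refl _)
    obtain ⟨T, hT, hTval⟩ := hex ∅
    rw [Finset.subset_empty] at hT
    subst hT
    simp [hk0] at hTval h1 ⊢
    linarith
  refine ⟨?_, hzero, ?_, ?_⟩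
  · ext x
    simp only [Set.mem_inter_iff, Set.mem_setOf_eq]
    constructor
    · rintro ⟨⟨hpos, hk'⟩, hbox⟩
      refine ⟨hpos, fun A => ?_⟩
      rw [hfbar A]
      apply Finset.le_inf'
      intro B hB
      rw [Finset.mem_powerset] at hB
      have hsplit : ∑ l ∈ A \ B, x l + ∑ l ∈ B, x l = ∑ l ∈ A, x l :=
        Finset.sum_sdiff hB
      have h1 : ∑ l ∈ A \ B, x l ≤ k (A \ B) := hk' _
      have h2 : ∑ l ∈ B, x l ≤ ∑ l ∈ B, Xbar l :=
        Finset.sum_le_sum (fun l _ => hbox l)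
      linarith
    · rintro ⟨hpos, hf⟩
      refine ⟨⟨hpos, fun A => ?_⟩, fun l => ?_⟩
      · have := hle A A (subset_refl _)
        simp at this
        linarith [hf A]
      · have h1 := hf {l}
        have h2 := hle {l} ∅ (Finset.empty_subset _)
        simp [hk0] at h1 h2
        linarith
  · -- monotone
    intro A B hAB
    obtain ⟨T, hT, hTval⟩ := hex B
    have h1 : fbar A ≤ k (T ∩ A) + ∑ l ∈ A \ (T ∩ A), Xbar l :=
      hle A (T ∩ A) Finset.inter_subset_right
    have h2 : k (T ∩ A) ≤ k T := hkmono _ _ Finset.inter_subset_left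
    have h3 : ∑ l ∈ A \ (T ∩ A), Xbar l ≤ ∑ l ∈ B \ T, Xbar l := by
      apply Finset.sum_le_sum_of_subset_of_nonneg
      · intro l hl
        rw [Finset.mem_sdiff] at hl ⊢
        rw [Finset.mem_inter] at hl
        exact ⟨hAB hl.1, fun hT' => hl.2 ⟨hT', hl.1⟩⟩
      · intro l _ _; exact hX l
    linarith
  · -- submodular
    intro A B
    obtain ⟨TA, hTA, hTAval⟩ := hex A
    obtain ⟨TB, hTB, hTBval⟩ := hex B
    have h1 : fbar (A ∪ B) ≤ k (TA ∪ TB) + ∑ l ∈ (A ∪ B) \ (TA ∪ TB), Xbar l :=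
      hle _ _ (Finset.union_subset_union hTA hTB)
    have h2 : fbar (A ∩ B) ≤ k (TA ∩ TB) + ∑ l ∈ (A ∩ B) \ (TA ∩ TB), Xbar l :=
      hle _ _ (Finset.inter_subset_inter hTA hTB)
    have h3 := hksub TA TB
    have h4 := stmt18_aux_sum A B TA TB hTA hTB Xbar hX
    linarith
end

section
/- If the VCG utility allocation lies in the core, then it is the pointwise maximal core utility for each bidder: for every l ∈ L, u_l^{VCG} = max { u_l : u ∈ Core(C) }, where u_l^{VCG} = J(C_{-l}) − J(C). -/
/-- if the VCG utility allocation lies in the core, then for each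
bidder `l` the VCG utility `u_l^{VCG} = J(L \ {l}) − J(L)` is the maximum of
`u_l` over the core. -/
theorem stmt_19 {L : Type*} [Fintype L] [DecidableEq L] (J : Finset L → ℝ)
    (hmono : ∀ R S : Finset L, R ⊆ S → J S ≤ J R)
    (Core : Set (ℝ × (L → ℝ)))
    (hCore : Core = {p : ℝ × (L → ℝ) | (∀ l, 0 ≤ p.2 l) ∧
      p.1 + ∑ l, p.2 l = -J Finset.univ ∧
      ∀ S : Finset L, p.1 + ∑ l ∈ S, p.2 l ≥ -J S})
    (uVCG : L → ℝ)
    (huVCG : ∀ l, uVCG l = J (Finset.univ.erase l) - J Finset.univ)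
    (hmem : (-J Finset.univ - ∑ l, uVCG l, uVCG) ∈ Core) :
    ∀ l : L, IsGreatest ((fun p : ℝ × (L → ℝ) => p.2 l) '' Core) (uVCG l) := by
  intro l
  constructor
  · exact ⟨_, hmem, rfl⟩
  · rintro x ⟨p, hp, rfl⟩
    rw [hCore] at hp
    obtain ⟨hpos, htot, hineq⟩ := hp
    have hS := hineq (Finset.univ.erase l)
    have hsplit : p.1 + ∑ m, p.2 m
        = (p.1 + ∑ m ∈ Finset.univ.erase l, p.2 m) + p.2 l := by
      rw [← Finset.add_sum_erase _ _ (Finset.mem_univ l)]; ring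
    have : p.2 l ≤ J (Finset.univ.erase l) - J Finset.univ := by
      have := htot
      rw [hsplit] at this
      linarith
    rw [huVCG l]
    exact this
end
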